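/- Let M = (G, π) be an ACGS with π(i) = ir for every i ∈ A and π(i) ∈ {ir, IR} for every i ∈ Ā = Ag \ A, and let ⟨⟨A⟩⟩ψ be a simple ATL formula. Then ⟦⟨⟨A⟩⟩ψ⟧_M = ⋃_{ξ_A} ⋂_{ξ_{Ā_ir}} ⟦⟨⟨∅⟩⟩ψ⟧_{M(ξ_A, ξ_{Ā_ir})}, where the union ranges over all collective strategies ξ_A of A in M, the intersection over all collective strategies ξ_{Ā_ir} of Ā_ir = {i ∈ Ā : π(i) = ir}, and M(ξ_A, ξ_{Ā_ir}) is the ACGS obtained from (G, π) by removing every transition whose joint action assigns to some agent i ∈ A ∪ Ā_ir a local action different from the one prescribed by ξ_A resp. ξ_{Ā_ir} at the source state. -/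
import Mathlib


namespace ACGS

/-- Strategy types: perfect/imperfect information (`I`/`i`) and
perfect/imperfect recall (`R`/`r`). -/
inductive SType where
  | IR | Ir | iR | ir
deriving DecidableEq

/-- A concurrent game structure. -/
structure CGS (S Agt AP : Type) (Ac : Agt → Type) where
  init : Set S
  sim : Agt → S → S → Prop
  sim_equiv : ∀ i, Equivalence (sim i)
  prot : (i : Agt) → S → Set (Ac i)
  prot_nonempty : ∀ i s, (prot i s).Nonempty
  prot_sim : ∀ i s s', sim i s s' → prot i s = prot i s'
  trans : S → ((i : Agt) → Ac i) → S
  label : S → Set AP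

variable {S Agt AP : Type} {Ac : Agt → Type}

/-- A history: a nonempty list of states, most recent state first. -/
abbrev Hist (S : Type) : Type := { l : List S // l ≠ [] }

/-- The current (last) state of a history. -/
def Hist.cur (h : Hist S) : S := h.1.head h.2

def Hist.one (s : S) : Hist S := ⟨[s], by simp⟩

def Hist.cons (s : S) (h : Hist S) : Hist S := ⟨s :: h.1, by simp⟩

/-- Indistinguishability of (equal-length) histories for agent `i`:
componentwise epistemic accessibility. -/
def Hist.sim (G : CGS S Agt AP Ac) (i : Agt) (h h' : Hist S) : Prop :=
  List.Forall₂ (G.sim i) h.1 h'.1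

/-- A strategy of agent `i` (a priori with perfect information and perfect recall):
a protocol-respecting function from histories to local actions. -/
structure Strat (G : CGS S Agt AP Ac) (i : Agt) where
  act : Hist S → Ac i
  legal : ∀ h, act h ∈ G.prot i h.cur

/-- `θ` is a `σ`-strategy of agent `i`.  `Ir`- and `ir`-strategies are (extensions
to histories of) functions of the last state, `iR`-strategies respect history
indistinguishability, `ir`-strategies moreover respect state indistinguishability. -/
def StratOfType (G : CGS S Agt AP Ac) (i : Agt) : SType → Strat G i → Prop
  | .IR, _ => True
  | .Ir, θ => ∀ h h', h.cur = h'.cur → θ.act h = θ.act h'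
  | .iR, θ => ∀ h h', Hist.sim G i h h' → θ.act h = θ.act h'
  | .ir, θ => ∀ h h', G.sim i h.cur h'.cur → θ.act h = θ.act h'

/-- A full strategy profile. -/
def Profile (G : CGS S Agt AP Ac) := ∀ i, Strat G i

/-- The history of the unique play from `s` where all agents follow `η`. -/
def playHist (G : CGS S Agt AP Ac) (η : Profile G) (s : S) : ℕ → Hist S
  | 0 => Hist.one s
  | n+1 =>
    let h := playHist G η s n
    Hist.cons (G.trans h.cur fun i => (η i).act h) h

/-- The unique play from `s` where every agent follows the profile `η`. -/
def play (G : CGS S Agt AP Ac) (η : Profile G) (s : S) (n : ℕ) : S :=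
  (playHist G η s n).cur

/-- An agents' abilities augmented concurrent game structure (ACGS):
a CGS together with a strategy type for each agent; the epistemic
accessibility relation of perfect-information agents is the identity. -/
structure ACGSModel (S Agt AP : Type) (Ac : Agt → Type) where
  G : CGS S Agt AP Ac
  pi : Agt → SType
  sim_id : ∀ i, (pi i = .IR ∨ pi i = .Ir) → ∀ s s', G.sim i s s' → s = s'

/-- A collective strategy of the coalition `A`. -/
def CollStrat (M : ACGSModel S Agt AP Ac) (A : Set Agt) : Type :=
  ∀ i, i ∈ A → Strat M.G i

/-- Each member of the coalition uses a strategy of its declared type. -/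
def CollOk (M : ACGSModel S Agt AP Ac) (A : Set Agt) (ξ : CollStrat M A) : Prop :=
  ∀ i (h : i ∈ A), StratOfType M.G i (M.pi i) (ξ i h)

/-- Outcomes in an ACGS: plays from `s` in which each `i ∈ A` follows `ξ i`
and each agent outside `A` follows some `π(i)`-strategy. -/
def outcomesM (M : ACGSModel S Agt AP Ac) (s : S) (A : Set Agt) (ξ : CollStrat M A) :
    Set (ℕ → S) :=
  { ρ | ∃ η : Profile M.G, (∀ i (h : i ∈ A), η i = ξ i h) ∧
      (∀ i, i ∉ A → StratOfType M.G i (M.pi i) (η i)) ∧ ρ = play M.G η s }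

/-- A collective strategy of `A` in a plain CGS. -/
def CollStratC (G : CGS S Agt AP Ac) (A : Set Agt) : Type :=
  ∀ i, i ∈ A → Strat G i

/-- A collective `σ`-strategy. -/
def CollOkC (G : CGS S Agt AP Ac) (σ : SType) (A : Set Agt) (ξ : CollStratC G A) : Prop :=
  ∀ i (h : i ∈ A), StratOfType G i σ (ξ i h)

/-- Outcomes in a plain CGS: plays from `s` in which each `i ∈ A` follows `ξ i`
and each agent outside `A` follows an arbitrary (`IR`-) strategy. -/
def outcomesC (G : CGS S Agt AP Ac) (s : S) (A : Set Agt) (ξ : CollStratC G A) :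
    Set (ℕ → S) :=
  { ρ | ∃ η : Profile G, (∀ i (h : i ∈ A), η i = ξ i h) ∧ ρ = play G η s }


/-- LTL formulas over atomic propositions `AP`, built from atoms by
`¬`, `∧`, `X` (next), `U` (until) and `R` (release). -/
inductive LTL (AP : Type) where
  | atom : AP → LTL AP
  | neg : LTL AP → LTL AP
  | conj : LTL AP → LTL AP → LTL AP
  | next : LTL AP → LTL AP
  | untl : LTL AP → LTL AP → LTL AP
  | rels : LTL AP → LTL AP → LTL AP

/-- Satisfaction of an LTL formula on an ω-word over `2^AP`. -/
def ltlSatW : (ℕ → Set AP) → LTL AP → Prop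
  | w, .atom q => q ∈ w 0
  | w, .neg φ => ¬ ltlSatW w φ
  | w, .conj φ ψ => ltlSatW w φ ∧ ltlSatW w ψ
  | w, .next φ => ltlSatW (fun n => w (n+1)) φ
  | w, .untl φ ψ => ∃ k, ltlSatW (fun n => w (n+k)) ψ ∧ ∀ j < k, ltlSatW (fun n => w (n+j)) φ
  | w, .rels φ ψ => ∀ k, (∀ j < k, ¬ ltlSatW (fun n => w (n+j)) φ) → ltlSatW (fun n => w (n+k)) ψ

/-- Satisfaction of an LTL formula on a path of a labelled structure. -/
def ltlSat (label : S → Set AP) (ρ : ℕ → S) (φ : LTL AP) : Prop :=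
  ltlSatW (fun n => label (ρ n)) φ


/-- `M, s ⊨ ⟨⟨A⟩⟩ψ` for a simple ATL/ATL* formula whose body `ψ` is an LTL formula:
the coalition `A` has a collective strategy (of the declared types) such that
every outcome satisfies `ψ`. -/
def simpleSat (M : ACGSModel S Agt AP Ac) (A : Set Agt) (ψ : LTL AP) (s : S) : Prop :=
  ∃ ξ : CollStrat M A, CollOk M A ξ ∧ ∀ ρ ∈ outcomesM M s A ξ, ltlSat M.G.label ρ ψ

/-- `g` prescribes, for each agent of `B`, a memoryless (`ir`-) strategy:
a protocol-respecting, `∼ᵢ`-invariant function from states to local actions. -/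
def MemoSel (M : ACGSModel S Agt AP Ac) (B : Set Agt) (g : ∀ i, S → Ac i) : Prop :=
  ∀ i ∈ B, (∀ s, g i s ∈ M.G.prot i s) ∧ (∀ s s', M.G.sim i s s' → g i s = g i s')

open Classical in
/-- The ACGS `M(ξ)` obtained from `M` by removing every transition in which some
agent `i ∈ B` takes a local action different from the one prescribed by `g` at the
source state; equivalently, the protocol of `i ∈ B` at `s` is restricted to the
single prescribed action `g i s`. -/
noncomputable def restrictM (M : ACGSModel S Agt AP Ac) (B : Set Agt)
    (g : ∀ i, S → Ac i) (hg : MemoSel M B g) : ACGSModel S Agt AP Ac where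
  G :=
    { init := M.G.init
      sim := M.G.sim
      sim_equiv := M.G.sim_equiv
      prot := fun i s => if i ∈ B then {g i s} else M.G.prot i s
      prot_nonempty := by
        intro i s
        by_cases h : i ∈ B
        · exact ⟨g i s, by simp [h]⟩
        · simpa [h] using M.G.prot_nonempty i s
      prot_sim := by
        intro i s s' hsim
        by_cases h : i ∈ B
        · simp [h, (hg i h).2 s s' hsim]
        · simp [h, M.G.prot_sim i s s' hsim]
      trans := M.G.trans
      label := M.G.label }
  pi := M.pi
  sim_id := M.sim_id

open Classical in
/-- Merging two memoryless prescriptions. -/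
theorem MemoSel.merge (M : ACGSModel S Agt AP Ac) {A B : Set Agt}
    {g g' : ∀ i, S → Ac i} (hg : MemoSel M A g) (hg' : MemoSel M B g') :
    MemoSel M (A ∪ B) (fun i => if i ∈ A then g i else g' i) := by
  intro i hi
  by_cases hiA : i ∈ A
  · simpa [hiA] using hg i hiA
  · have hiB : i ∈ B := hi.resolve_left hiA
    simpa [hiA] using hg' i hiB

/-- Plays only depend on the transition function and the action maps. -/
theorem playHist_congr {S Agt AP : Type} {Ac : Agt → Type}
    {G G' : CGS S Agt AP Ac} (η : Profile G) (η' : Profile G')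
    (htrans : G.trans = G'.trans)
    (hact : ∀ i h, (η i).act h = (η' i).act h) (s : S) :
    ∀ n, playHist G η s n = playHist G' η' s n
  | 0 => rfl
  | n + 1 => by
    have ih := playHist_congr η η' htrans hact s n
    show Hist.cons _ _ = Hist.cons _ _
    have hfun : ∀ h : Hist S, (fun i => (η i).act h) = fun i => (η' i).act h :=
      fun h => funext fun i => hact i h
    rw [ih, htrans, hfun]

theorem play_congr {S Agt AP : Type} {Ac : Agt → Type}
    {G G' : CGS S Agt AP Ac} (η : Profile G) (η' : Profile G')
    (htrans : G.trans = G'.trans)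
    (hact : ∀ i h, (η i).act h = (η' i).act h) (s : S) :
    play G η s = play G' η' s := by
  funext n
  unfold play
  rw [playHist_congr η η' htrans hact s n]

open Classical in
/-- For an ACGS `M = (G, π)` with `π(i) = ir` on the coalition `A` and
`π(i) ∈ {ir, IR}` outside `A`, and a simple ATL formula `⟨⟨A⟩⟩ψ`:
`⟦⟨⟨A⟩⟩ψ⟧_M = ⋃_{ξ_A} ⋂_{ξ_{Ā_ir}} ⟦⟨⟨∅⟩⟩ψ⟧_{M(ξ_A, ξ_{Ā_ir})}`,
the union ranging over the collective (memoryless) strategies of `A`, the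
intersection over those of the `ir`-typed agents outside `A`, and
`M(ξ_A, ξ_{Ā_ir})` being obtained from `M` by removing the transitions that
do not conform to `ξ_A` and `ξ_{Ā_ir}`. -/
theorem simple_atl_sat_as_union_of_intersections {S Agt AP : Type} {Ac : Agt → Type}
    (M : ACGSModel S Agt AP Ac) (A : Set Agt)
    (hA : ∀ i ∈ A, M.pi i = SType.ir)
    (hnA : ∀ i ∉ A, M.pi i = SType.ir ∨ M.pi i = SType.IR) (ψ : LTL AP) :
    { s | simpleSat M A ψ s } =
      ⋃ (g : ∀ i, S → Ac i) (hg : MemoSel M A g),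
        ⋂ (g' : ∀ i, S → Ac i)
          (hg' : MemoSel M { i | i ∉ A ∧ M.pi i = SType.ir } g'),
            { s | simpleSat
                (restrictM M (A ∪ { i | i ∉ A ∧ M.pi i = SType.ir })
                  (fun i => if i ∈ A then g i else g' i)
                  (MemoSel.merge M hg hg'))
                ∅ ψ s } := by
  classical
  ext s
  simp only [Set.mem_setOf_eq, Set.mem_iUnion, Set.mem_iInter]
  constructor
  · -- forward direction
    rintro ⟨ξ, hok, hout⟩
    have hirξ : ∀ i (hi : i ∈ A), ∀ h h', M.G.sim i h.cur h'.cur →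
        (ξ i hi).act h = (ξ i hi).act h' := by
      intro i hi
      have := hok i hi
      rwa [hA i hi] at this
    set gA : ∀ i, S → Ac i := fun i t =>
      if h : i ∈ A then (ξ i h).act (Hist.one t)
      else (M.G.prot_nonempty i t).choose with hgA_def
    have hgA : MemoSel M A gA := by
      intro i hi
      constructor
      · intro t
        simp only [hgA_def, dif_pos hi]
        exact (ξ i hi).legal (Hist.one t)
      · intro t t' hsim
        simp only [hgA_def, dif_pos hi]
        exact hirξ i hi (Hist.one t) (Hist.one t') hsim
    refine ⟨gA, hgA, ?_⟩
    intro g' hg'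
    set B := A ∪ {i | i ∉ A ∧ M.pi i = SType.ir} with hB
    set M' := restrictM M B (fun i => if i ∈ A then gA i else g' i)
      (MemoSel.merge M hgA hg') with hM'
    have hprot : ∀ i t, M'.G.prot i t =
        if i ∈ B then {(fun j => if j ∈ A then gA j else g' j) i t}
        else M.G.prot i t := by
      intro i t
      rw [hM']
      simp only [restrictM]
    have hforce : ∀ i, i ∈ B → ∀ h : Hist S,
        (η : Strat M'.G i) → (η.act h = (if i ∈ A then gA i else g' i) h.cur) := by
      intro i hi h η
      have hl := η.legal h
      rw [hprot i h.cur, if_pos hi, Set.mem_singleton_iff] at hl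
      exact hl
    refine ⟨fun i h => absurd h (Set.notMem_empty i),
      fun i h => absurd h (Set.notMem_empty i), ?_⟩
    rintro ρ ⟨η, -, hty, rfl⟩
    have legalout : ∀ i, i ∉ A → ∀ h : Hist S, (η i).act h ∈ M.G.prot i h.cur := by
      intro i hi h
      by_cases hir : M.pi i = SType.ir
      · have hiB : i ∈ B := Or.inr ⟨hi, hir⟩
        rw [hforce i hiB h (η i), if_neg hi]
        exact (hg' i ⟨hi, hir⟩).1 h.cur
      · have hiB : i ∉ B := by
          rintro (h1 | h2)
          exacts [hi h1, hir h2.2]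
        have hl := (η i).legal h
        rwa [hprot i h.cur, if_neg hiB] at hl
    set ηhat : Profile M.G := fun i =>
      if hi : i ∈ A then ξ i hi else ⟨(η i).act, legalout i hi⟩ with hηhat
    have hact : ∀ i h, (ηhat i).act h = (η i).act h := by
      intro i h
      by_cases hi : i ∈ A
      · simp only [hηhat, dif_pos hi]
        have hiB : i ∈ B := Or.inl hi
        rw [hforce i hiB h (η i), if_pos hi]
        simp only [hgA_def, dif_pos hi]
        exact hirξ i hi h (Hist.one h.cur) ((M.G.sim_equiv i).refl h.cur)
      · simp only [hηhat, dif_neg hi]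
    have hplay : play M.G ηhat s = play M'.G η s :=
      play_congr ηhat η rfl hact s
    have hmem : play M'.G η s ∈ outcomesM M s A ξ := by
      refine ⟨ηhat, ?_, ?_, hplay.symm⟩
      · intro i hi
        simp only [hηhat, dif_pos hi]
      · intro i hi
        rcases hnA i hi with hir | hIR
        · rw [hir]
          intro h h' hsim
          rw [hact i h, hact i h']
          have hty' := hty i (Set.notMem_empty i)
          have hpi : M'.pi i = SType.ir := hir
          rw [hpi] at hty'
          exact hty' h h' hsim
        · rw [hIR]
          trivial
    exact hout _ hmem
  · -- backward direction
    rintro ⟨g, hg, hall⟩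
    set ξ : CollStrat M A := fun i hi =>
      ⟨fun h => g i h.cur, fun h => (hg i hi).1 h.cur⟩ with hξdef
    refine ⟨ξ, ?_, ?_⟩
    · intro i hi
      rw [hA i hi]
      intro h h' hsim
      exact (hg i hi).2 _ _ hsim
    rintro ρ ⟨η, hηξ, hty, rfl⟩
    set g' : ∀ i, S → Ac i := fun i t =>
      if h : i ∈ A then g i t else (η i).act (Hist.one t) with hg'def
    have hirη : ∀ i, i ∉ A → M.pi i = SType.ir →
        ∀ h h', M.G.sim i h.cur h'.cur → (η i).act h = (η i).act h' := by
      intro i hi hir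
      have := hty i hi
      rwa [hir] at this
    have hg' : MemoSel M {i | i ∉ A ∧ M.pi i = SType.ir} g' := by
      rintro i ⟨hiA, hir⟩
      constructor
      · intro t
        simp only [hg'def, dif_neg hiA]
        exact (η i).legal (Hist.one t)
      · intro t t' hsim
        simp only [hg'def, dif_neg hiA]
        exact hirη i hiA hir (Hist.one t) (Hist.one t') hsim
    set B := A ∪ {i | i ∉ A ∧ M.pi i = SType.ir} with hB
    set M' := restrictM M B (fun i => if i ∈ A then g i else g' i)
      (MemoSel.merge M hg hg') with hM'
    obtain ⟨ξ₀, -, hout⟩ := hall g' hg'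
    have hprot : ∀ i t, M'.G.prot i t =
        if i ∈ B then {(fun j => if j ∈ A then g j else g' j) i t}
        else M.G.prot i t := by
      intro i t
      rw [hM']
      simp only [restrictM]
    have legal' : ∀ i (h : Hist S), (η i).act h ∈ M'.G.prot i h.cur := by
      intro i h
      by_cases hiA : i ∈ A
      · have heq : (η i).act h = g i h.cur := by rw [hηξ i hiA]
        have hiB : i ∈ B := Or.inl hiA
        rw [hprot i h.cur, if_pos hiB]
        simp only [if_pos hiA, Set.mem_singleton_iff]
        exact heq
      · by_cases hir : M.pi i = SType.ir
        · have hiB : i ∈ B := Or.inr ⟨hiA, hir⟩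
          have heq : (η i).act h = g' i h.cur := by
            simp only [hg'def, dif_neg hiA]
            exact hirη i hiA hir h (Hist.one h.cur) ((M.G.sim_equiv i).refl h.cur)
          rw [hprot i h.cur, if_pos hiB]
          simp only [if_neg hiA, Set.mem_singleton_iff]
          exact heq
        · have hiB : i ∉ B := by
            rintro (h1 | h2)
            exacts [hiA h1, hir h2.2]
          rw [hprot i h.cur, if_neg hiB]
          exact (η i).legal h
    set η' : Profile M'.G := fun i => ⟨(η i).act, legal' i⟩ with hη'def
    have hmem : play M'.G η' s ∈ outcomesM M' s ∅ ξ₀ := by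
      refine ⟨η', fun i hi => absurd hi (Set.notMem_empty i), ?_, rfl⟩
      intro i _
      by_cases hiA : i ∈ A
      · have hpi : M'.pi i = SType.ir := hA i hiA
        rw [hpi]
        intro h h' hsim
        show (η i).act h = (η i).act h'
        rw [hηξ i hiA]
        exact (hg i hiA).2 _ _ hsim
      · rcases hnA i hiA with hir | hIR
        · have hpi : M'.pi i = SType.ir := hir
          rw [hpi]
          intro h h' hsim
          exact hirη i hiA hir h h' hsim
        · have hpi : M'.pi i = SType.IR := hIR
          rw [hpi]
          trivial
    have hsat := hout _ hmem
    have hplay : play M.G η s = play M'.G η' s :=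
      play_congr η η' rfl (fun i h => rfl) s
    show ltlSat M.G.label (play M.G η s) ψ
    rw [hplay]
    exact hsat

end ACGS
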